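/- arXiv:1302.2310 — 4 statements merged into one kernel-verified Lean document; each statement's English description precedes it below -/
import Mathlib

section
/- Let n ≥ 1 and let 1 ≤ r ≤ n. Then the sum over all permutations σ in the symmetric group S_n of fix(σ)^r equals n! · B_r, where B_r = Σ_{i=0}^{r} S(r,i) is the r-th Bell number. Equivalently, the r-th moment of the number of fixed points of a uniformly random permutation of n letters is the r-th Bell number; representation-theoretically, this is the multiplicity of the trivial representation in the r-th tensor power of the n-dimensional permutation representation of S_n. -/
/-- Stirling numbers of the second kind. -/
def stirling : ℕ → ℕ → ℕ
  | 0, 0 => 1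
  | 0, _ + 1 => 0
  | _ + 1, 0 => 0
  | n + 1, k + 1 => (k + 1) * stirling n (k + 1) + stirling n k

/-- The `r`-th Bell number, `B_r = Σ_{i=0}^{r} S(r,i)`. -/
def bell (r : ℕ) : ℕ := ∑ i ∈ Finset.range (r + 1), stirling r i

/-- The number of fixed points of a permutation of `Fin n`. -/
def fixCount {n : ℕ} (σ : Equiv.Perm (Fin n)) : ℕ :=
  (Finset.univ.filter fun x => σ x = x).card

/-!
Double counting the pairs `(σ, x)` with `σ x = x` gives
`∑ σ, fix(σ)^(r+1) = ∑ x, ∑ {σ | σ x = x}, fix(σ)^r`, and a permutation fixing `x` is a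
permutation of the other `n - 1` points with one more fixed point. Expanding `(fix + 1)^r`
binomially, the moments `M_r(n) = ∑ σ ∈ S_n, fix(σ)^r` satisfy
`M_(r+1)(n) = n * ∑ k, C(r, k) * M_(r-k)(n - 1)`, which for `r < n` is `n!` times the Bell
recurrence `B_(r+1) = ∑ k, C(r, k) * B_(r-k)`.
-/

open Finset Nat

namespace Nat

theorem sum_range_choose_succ_mul (f : ℕ → ℕ) (n : ℕ) :
    ∑ j ∈ range (n + 2), (n + 1).choose j * f j =
      ∑ j ∈ range (n + 1), n.choose j * f (j + 1) + ∑ j ∈ range (n + 1), n.choose j * f j := by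
  rw [sum_range_succ' _ (n + 1), sum_range_succ' (fun j => n.choose j * f j)]
  simp only [choose_succ_succ', add_mul, sum_add_distrib, choose_zero_right]
  rw [sum_range_succ (fun j => n.choose (j + 1) * f (j + 1)) n, choose_succ_self, zero_mul,
    add_zero]
  ring

theorem stirlingSecond_succ_succ_eq_sum_choose_mul (n k : ℕ) :
    stirlingSecond (n + 1) (k + 1) = ∑ j ∈ range (n + 1), n.choose j * stirlingSecond j k := by
  induction n generalizing k with
  | zero => cases k <;> rfl
  | succ n ih =>
    rw [sum_range_choose_succ_mul]
    cases k with
    | zero => simp [stirlingSecond_succ_succ (n + 1), ih]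
    | succ k =>
      simp only [stirlingSecond_succ_succ, mul_add, sum_add_distrib, mul_left_comm _ (k + 1),
        ← mul_sum, ← ih]
      ring

theorem sum_range_stirlingSecond (n : ℕ) :
    ∑ k ∈ range (n + 1), stirlingSecond n k = n.bell := by
  induction n using Nat.strong_induction_on with
  | _ n ih =>
    cases n with
    | zero => simp
    | succ n =>
      have hbell : ∀ j ∈ range (n + 1), ∑ k ∈ range (n + 1), stirlingSecond j k = j.bell := by
        intro j hj
        rw [mem_range] at hj
        rw [← ih j (by omega), eq_comm]
        refine sum_subset (fun i hi => ?_) (fun i _ hi => ?_)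
        · simp only [mem_range] at *; omega
        · exact stirlingSecond_eq_zero_of_lt (by simpa using hi)
      rw [sum_range_succ', stirlingSecond_succ_zero, add_zero]
      simp only [stirlingSecond_succ_succ_eq_sum_choose_mul]
      rw [sum_comm]
      simp only [← mul_sum]
      rw [sum_congr rfl fun j hj => congrArg _ (hbell j hj), bell_succ, ← range_succ_eq_Iic,
        ← sum_range_reflect]
      refine sum_congr rfl fun j hj => ?_
      rw [mem_range] at hj
      rw [add_tsub_cancel_right, choose_symm (by omega)]

end Nat

theorem stirling_eq_stirlingSecond : ∀ n k : ℕ, stirling n k = stirlingSecond n k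
  | 0, 0 | 0, _ + 1 | _ + 1, 0 => rfl
  | n + 1, k + 1 => by
    rw [stirling, stirlingSecond_succ_succ, stirling_eq_stirlingSecond n,
      stirling_eq_stirlingSecond n]

theorem bell_eq_natBell (r : ℕ) : bell r = r.bell := by
  simp only [bell, stirling_eq_stirlingSecond, sum_range_stirlingSecond]

namespace Equiv.Perm

variable {α : Type*} [Fintype α] [DecidableEq α]

theorem card_fixed_ofSubtype_ne {x : α} (τ : Perm {y // y ≠ x}) :
    #{y | ofSubtype τ y = y} = #{y | τ y = y} + 1 := by
  rw [card_filter, card_filter, Fintype.sum_eq_add_sum_subtype_ne _ x, add_comm,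
    ofSubtype_apply_of_not_mem τ (not_not.2 rfl), if_pos rfl]
  simp [Subtype.ext_iff]

theorem sum_filter_apply_eq_self {M : Type*} [AddCommMonoid M] (x : α) (f : Perm α → M) :
    ∑ σ with σ x = x, f σ = ∑ τ : Perm {y // y ≠ x}, f (ofSubtype τ) := by
  let e : Perm {y // y ≠ x} ≃ {σ : Perm α // σ x = x} :=
    (Perm.subtypeEquivSubtypePerm (· ≠ x)).trans (subtypeEquivRight fun σ => by simp)
  rw [sum_subtype (p := fun σ : Perm α => σ x = x) _ (fun σ => by simp) f]
  exact (Fintype.sum_equiv e _ _ fun τ => rfl).symm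

theorem sum_card_fixed_pow_succ (r : ℕ) :
    ∑ σ : Perm α, #{x | σ x = x} ^ (r + 1) =
      ∑ x : α, ∑ τ : Perm {y // y ≠ x}, (#{y | τ y = y} + 1) ^ r := by
  calc ∑ σ : Perm α, #{x | σ x = x} ^ (r + 1)
      = ∑ σ : Perm α, ∑ x with σ x = x, #{y | σ y = y} ^ r := by
        simp only [sum_const, smul_eq_mul, pow_succ']
    _ = ∑ x : α, ∑ σ : Perm α with σ x = x, #{y | σ y = y} ^ r := by
        simp only [sum_filter]; exact sum_comm
    _ = _ := by simp only [sum_filter_apply_eq_self, card_fixed_ofSubtype_ne]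

theorem sum_card_fixed_pow (r : ℕ) (hr : r ≤ Fintype.card α) :
    ∑ σ : Perm α, #{x | σ x = x} ^ r = (Fintype.card α)! * r.bell := by
  induction r using Nat.strong_induction_on generalizing α with
  | _ r ih =>
  cases r with
  | zero => simp [Fintype.card_perm]
  | succ r =>
    have hcard : Fintype.card α ≠ 0 := by omega
    have hsub (x : α) : Fintype.card {y // y ≠ x} = Fintype.card α - 1 := by
      simp [Fintype.card_subtype_compl]
    have hinner (x : α) : ∑ τ : Perm {y // y ≠ x}, (#{y | τ y = y} + 1) ^ r =
        (Fintype.card α - 1)! * (r + 1).bell := by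
      calc ∑ τ : Perm {y // y ≠ x}, (#{y | τ y = y} + 1) ^ r
          = ∑ k ∈ range (r + 1),
              r.choose k * ∑ τ : Perm {y // y ≠ x}, #{y | τ y = y} ^ (r - k) := by
            simp only [add_comm _ 1, add_pow, one_pow, one_mul, mul_sum]
            rw [sum_comm]
            exact sum_congr rfl fun _ _ => sum_congr rfl fun _ _ => mul_comm _ _
        _ = ∑ k ∈ range (r + 1), r.choose k * ((Fintype.card α - 1)! * (r - k).bell) := by
            refine sum_congr rfl fun k hk => ?_
            rw [ih (r - k) (by omega) (by rw [hsub]; omega), hsub]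
        _ = (Fintype.card α - 1)! * (r + 1).bell := by
            rw [Nat.bell_succ, ← Nat.range_succ_eq_Iic, mul_sum]
            exact sum_congr rfl fun _ _ => by ring
    rw [sum_card_fixed_pow_succ, sum_congr rfl fun x _ => hinner x, sum_const, Finset.card_univ,
      smul_eq_mul, ← mul_assoc, Nat.mul_factorial_pred hcard]

end Equiv.Perm

theorem sum_fix_pow_eq_factorial_mul_bell_general (n r : ℕ) (hrn : r ≤ n) :
    ∑ σ : Equiv.Perm (Fin n), (fixCount σ) ^ r = Nat.factorial n * bell r := by
  simpa [fixCount, bell_eq_natBell] using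
    Equiv.Perm.sum_card_fixed_pow (α := Fin n) r (by simpa using hrn)

theorem sum_fix_pow_eq_factorial_mul_bell (n r : ℕ) (hn : 1 ≤ n)
    (hr1 : 1 ≤ r) (hrn : r ≤ n) :
    ∑ σ : Equiv.Perm (Fin n), (fixCount σ) ^ r = Nat.factorial n * bell r :=
  sum_fix_pow_eq_factorial_mul_bell_general n r hrn
end

section
/- Let n ≥ 4 and let 2 ≤ r ≤ n−2. Then Σ_{σ ∈ S_n} fix(σ)^r · ( C(fix(σ),2) + c₂(σ) − fix(σ) ) = n! · Σ_{i=2}^{r} C(i,2) · S(r,i), where C(a,b) denotes the binomial coefficient. Representation-theoretically, this says the multiplicity of the irreducible representation S^{(n−2,2)} of S_n in the r-th tensor power of the n-dimensional permutation representation equals Σ_{i=2}^{r} C(i,2) S(r,i). -/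
/-- The number of 2-cycles (transpositions) in the cycle decomposition of a permutation. -/
def twoCycleCount {n : ℕ} (σ : Equiv.Perm (Fin n)) : ℕ :=
  Multiset.count 2 σ.cycleType

/-!
Write `f = fix σ` and `χ = C(f, 2) + c₂ - f`. Expanding `f ^ r = ∑ i, S(r, i) * f.descFactorial i`,
it suffices to show `∑ σ, f.descFactorial i * χ σ = n! * C(i, 2)` whenever `i + 2 ≤ n`.

Here `f.descFactorial k` counts the embeddings `g : Fin k ↪ α` with `σ ∘ g = g`, and
`2 c₂ * f.descFactorial i` counts the embeddings `g : Fin 2 ⊕ Fin i ↪ α` with `σ ∘ g = g ∘ τ`,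
`τ` swapping the two left points. As `Perm α` acts transitively on embeddings, double counting
gives `∑ σ, #{g | σ • g = π g} = n!` for every `π` (each `{σ | σ • g = h}` is a coset of a
stabilizer), so all these sums equal `n!`. Finally `2 * f.descFactorial i * χ` is a combination of
`f.descFactorial (i + 2)`, `f.descFactorial (i + 1)`, `f.descFactorial i` and
`2 c₂ * f.descFactorial i` whose coefficients add up to `2 * C(i, 2)`.
-/

open Finset Nat Equiv Equiv.Perm MulAction

theorem stirling_eq_stirlingSecond_s2 : stirling = Nat.stirlingSecond := by
  funext n k
  induction n generalizing k with
  | zero => cases k <;> rfl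
  | succ n ih =>
    cases k with
    | zero => rfl
    | succ k => rw [stirling, stirlingSecond_succ_succ, ih, ih]

theorem Nat.mul_descFactorial (x i : ℕ) :
    x * x.descFactorial i = x.descFactorial (i + 1) + i * x.descFactorial i := by
  rcases le_or_gt i x with h | h
  · rw [descFactorial_succ, ← add_mul, Nat.sub_add_cancel h]
  · simp [descFactorial_of_lt h]

theorem Nat.pow_eq_sum_stirlingSecond_mul_descFactorial (x r : ℕ) :
    x ^ r = ∑ i ∈ range (r + 1), stirlingSecond r i * x.descFactorial i := by
  induction r with
  | zero => simp
  | succ r ih =>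
    have hshift : ∑ i ∈ range (r + 1), stirlingSecond r i * (i * x.descFactorial i) =
        ∑ i ∈ range (r + 1), (i + 1) * stirlingSecond r (i + 1) * x.descFactorial (i + 1) := by
      have h := sum_range_succ' (fun i => i * stirlingSecond r i * x.descFactorial i) (r + 1)
      rw [sum_range_succ, stirlingSecond_eq_zero_of_lt (lt_add_one r)] at h
      simp only [mul_zero, zero_mul, add_zero] at h
      rw [← h]
      exact sum_congr rfl fun i _ => by ring
    calc x ^ (r + 1) = ∑ i ∈ range (r + 1), stirlingSecond r i * (x * x.descFactorial i) := by
          rw [pow_succ, ih, sum_mul]; exact sum_congr rfl fun i _ => by ring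
      _ = ∑ i ∈ range (r + 1), stirlingSecond (r + 1) (i + 1) * x.descFactorial (i + 1) := by
          simp only [mul_descFactorial, mul_add, sum_add_distrib, hshift,
            stirlingSecond_succ_succ, add_mul]
          rw [add_comm]
      _ = _ := by rw [sum_range_succ' _ (r + 1), stirlingSecond_succ_zero, zero_mul, add_zero]

theorem Nat.two_mul_descFactorial_mul_choose_two_add_sub (f c i : ℕ) :
    2 * ((f.descFactorial i : ℤ) * (f.choose 2 + c - f)) =
      f.descFactorial (i + 2) + (2 * i - 2) * f.descFactorial (i + 1) +
        (i ^ 2 - 3 * i) * f.descFactorial i + 2 * c * f.descFactorial i := by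
  have h₁ : (f * f.descFactorial i : ℤ) = f.descFactorial (i + 1) + i * f.descFactorial i := by
    exact_mod_cast mul_descFactorial f i
  have h₂ : (f * f.descFactorial (i + 1) : ℤ) =
      f.descFactorial (i + 2) + (i + 1) * f.descFactorial (i + 1) := by
    exact_mod_cast mul_descFactorial f (i + 1)
  have h₃ : (2 * f.choose 2 : ℤ) = f * (f - 1) := by
    qify
    rw [cast_choose_two]
    ring
  linear_combination (f.descFactorial i : ℤ) * h₃ + h₂ + (f + i - 3 : ℤ) * h₁

section Pretransitive

variable {G X : Type*} [Group G] [Fintype G] [MulAction G X] [IsPretransitive G X] [DecidableEq X]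

theorem card_filter_smul_eq_of_isPretransitive (x y x' y' : X) :
    #{g : G | g • x = y} = #{g : G | g • x' = y'} := by
  obtain ⟨a, rfl⟩ := exists_smul_eq G x x'
  obtain ⟨b, rfl⟩ := exists_smul_eq G y y'
  refine card_nbij' (fun g => b * g * a⁻¹) (fun g => b⁻¹ * g * a) ?_ ?_ ?_ ?_ <;>
    intro g <;> simp [mul_smul, inv_smul_eq_iff, mul_assoc]

theorem sum_card_filter_smul_eq_apply [Fintype X] [Nonempty X] (π : X → X) :
    ∑ g : G, #{x | g • x = π x} = Fintype.card G := by
  obtain ⟨x₀⟩ := ‹Nonempty X›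
  calc ∑ g : G, #{x | g • x = π x} = ∑ x, #{g : G | g • x = π x} :=
        sum_card_bipartiteAbove_eq_sum_card_bipartiteBelow _
    _ = ∑ x, #{g : G | g • x₀ = x} :=
        sum_congr rfl fun x _ => card_filter_smul_eq_of_isPretransitive _ _ _ _
    _ = Fintype.card G := (card_eq_sum_card_fiberwise fun _ _ => mem_univ _).symm

end Pretransitive

instance Equiv.Perm.isPretransitive_embedding {α ι : Type*} [Finite ι] :
    IsPretransitive (Perm α) (ι ↪ α) :=
  ⟨exists_smul_eq_embedding⟩

theorem Equiv.Perm.smul_embedding_eq_iff {α ι : Type*} (σ : Perm α) (g h : ι ↪ α) :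
    σ • g = h ↔ ∀ j, σ (g j) = h j := by
  simp [DFunLike.ext_iff, Function.Embedding.smul_apply, Perm.smul_def]

section Perm

variable {α : Type*} [Fintype α] [DecidableEq α]

theorem card_filter_smul_embedding_eq_self (σ : Perm α) (k : ℕ) :
    #{g : Fin k ↪ α | σ • g = g} = (#{x | σ x = x}).descFactorial k := by
  let e : (Fin k ↪ {x // σ x = x}) ≃ {g : Fin k ↪ α // σ • g = g} :=
    { toFun := fun e => ⟨e.trans (Function.Embedding.subtype _),
        (σ.smul_embedding_eq_iff _ _).2 fun j => (e j).2⟩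
      invFun := fun g => Function.Embedding.codRestrict _ g.1 ((σ.smul_embedding_eq_iff _ _).1 g.2)
      left_inv := fun e => rfl
      right_inv := fun g => rfl }
  rw [← Fintype.card_subtype, ← Fintype.card_congr e, Fintype.card_embedding_eq,
    Fintype.card_fin, Fintype.card_subtype]

theorem sum_descFactorial_card_fixedPoints {k : ℕ} (hk : k ≤ Fintype.card α) :
    ∑ σ : Perm α, (#{x | σ x = x}).descFactorial k = (Fintype.card α)! := by
  have : Nonempty (Fin k ↪ α) := Function.Embedding.nonempty_of_card_le (by simpa using hk)
  simp_rw [← card_filter_smul_embedding_eq_self, ← Fintype.card_perm]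
  exact sum_card_filter_smul_eq_apply id

theorem card_filter_apply_ne_and_apply_apply_eq (σ : Perm α) :
    #{x | σ x ≠ x ∧ σ (σ x) = x} = 2 * σ.cycleType.count 2 := by
  set T := {c ∈ σ.cycleFactorsFinset | #c.support = 2}
  have hD : ({x | σ x ≠ x ∧ σ (σ x) = x} : Finset α) = T.biUnion support := by
    ext x
    simp only [mem_filter, mem_univ, true_and, mem_biUnion, T]
    constructor
    · rintro ⟨h1, h2⟩
      have hsupp := support_swap (Ne.symm h1)
      refine ⟨swap x (σ x), ⟨mem_cycleFactorsFinset_iff.2 ⟨isCycle_swap (Ne.symm h1), ?_⟩,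
        card_support_swap (Ne.symm h1)⟩, by simp [hsupp]⟩
      intro a ha
      rw [hsupp, mem_insert, mem_singleton] at ha
      rcases ha with rfl | rfl <;> simp [h2]
    · rintro ⟨c, ⟨hc, hc2⟩, hx⟩
      obtain ⟨a, b, hab, rfl⟩ := card_support_eq_two.1 hc2
      have hσ := (mem_cycleFactorsFinset_iff.1 hc).2
      rw [← hσ x hx, ← hσ _ (apply_mem_support.2 hx), swap_apply_self]
      exact ⟨mem_support.1 hx, rfl⟩
  have hT : σ.cycleType.count 2 = #T := by
    rw [cycleType_def, Multiset.count_map, card_def, filter_val]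
    exact congrArg _ (Multiset.filter_congr fun c _ => eq_comm)
  rw [hD, card_biUnion, sum_const_nat fun c hc => (mem_filter.1 hc).2, hT, mul_comm]
  exact fun c hc d hd hcd => (cycleFactorsFinset_pairwise_disjoint σ (mem_filter.1 hc).1
    (mem_filter.1 hd).1 hcd).disjoint_support

theorem card_filter_smul_embedding_eq_swap (σ : Perm α) (i : ℕ) :
    #{g : Fin 2 ⊕ Fin i ↪ α | σ • g = (Perm.sumCongr (swap 0 1) 1).toEmbedding.trans g} =
      #{x | σ x ≠ x ∧ σ (σ x) = x} * #{e : Fin i ↪ α | σ • e = e} := by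
  rw [← card_product]
  simp only [smul_embedding_eq_iff]
  refine card_bij' (fun g _ => (g (.inl 0), Function.Embedding.inr.trans g))
    (fun p hp => ⟨Sum.elim ![p.1, σ p.1] p.2, ?_⟩) ?_ ?_ ?_ ?_
  · obtain ⟨⟨hx, hxx⟩, he⟩ := by simpa using hp
    refine Function.Injective.sumElim ?_ p.2.injective ?_
    · intro a b
      fin_cases a <;> fin_cases b <;> simp [hx, Ne.symm hx]
    · intro a j h
      fin_cases a <;>
        simp only [Fin.zero_eta, Fin.mk_one, Fin.isValue, Matrix.cons_val_zero,
          Matrix.cons_val_one, Matrix.cons_val_fin_one] at h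
      · exact hx (by rw [h, he j])
      · exact hx (by rw [h, ← he j, ← h, hxx])
  · intro g hg
    simp only [mem_filter, mem_univ, true_and] at hg
    have h0 : σ (g (.inl 0)) = g (.inl 1) := by simpa using hg (.inl 0)
    have h1 : σ (g (.inl 1)) = g (.inl 0) := by simpa using hg (.inl 1)
    simp_all [swap_apply_of_ne_of_ne]
  · rintro ⟨x, e⟩ hp
    obtain ⟨⟨hx, hxx⟩, he⟩ := by simpa using hp
    simp only [mem_filter, mem_univ, true_and]
    rintro (j | j)
    · fin_cases j <;> simp [hxx]
    · simpa [swap_apply_of_ne_of_ne] using he j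
  · intro g hg
    simp only [mem_filter, mem_univ, true_and] at hg
    ext (j | j)
    · fin_cases j
      · rfl
      · simpa using hg (.inl 0)
    · rfl
  · intro p _
    rfl

theorem sum_card_filter_apply_ne_and_apply_apply_eq_mul_descFactorial {i : ℕ}
    (hi : i + 2 ≤ Fintype.card α) :
    ∑ σ : Perm α, #{x | σ x ≠ x ∧ σ (σ x) = x} * (#{x | σ x = x}).descFactorial i =
      (Fintype.card α)! := by
  have : Nonempty (Fin 2 ⊕ Fin i ↪ α) :=
    Function.Embedding.nonempty_of_card_le (by simpa [add_comm] using hi)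
  simp_rw [← card_filter_smul_embedding_eq_self, ← card_filter_smul_embedding_eq_swap,
    ← Fintype.card_perm]
  exact sum_card_filter_smul_eq_apply _

theorem sum_descFactorial_mul_character {i : ℕ} (hi : i + 2 ≤ Fintype.card α) :
    ∑ σ : Perm α, ((#{x | σ x = x}).descFactorial i : ℤ) *
        ((#{x | σ x = x}).choose 2 + σ.cycleType.count 2 - #{x | σ x = x}) =
      (Fintype.card α)! * i.choose 2 := by
  have hfix (k : ℕ) (hk : k ≤ i + 2) :
      ∑ σ : Perm α, ((#{x | σ x = x}).descFactorial k : ℤ) = (Fintype.card α)! := by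
    exact_mod_cast sum_descFactorial_card_fixedPoints (hk.trans hi)
  have htwo : ∑ σ : Perm α, 2 * (σ.cycleType.count 2 : ℤ) * (#{x | σ x = x}).descFactorial i =
      (Fintype.card α)! := by
    have h := sum_card_filter_apply_ne_and_apply_apply_eq_mul_descFactorial hi
    simp_rw [card_filter_apply_ne_and_apply_apply_eq] at h
    exact_mod_cast h
  have hchoose : (2 * i.choose 2 : ℤ) = i * (i - 1) := by
    qify
    rw [cast_choose_two]
    ring
  apply mul_left_cancel₀ (two_ne_zero (α := ℤ))
  simp_rw [mul_sum, two_mul_descFactorial_mul_choose_two_add_sub, sum_add_distrib, ← mul_sum,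
    htwo, hfix i (by omega), hfix (i + 1) (by omega), hfix (i + 2) le_rfl]
  linear_combination -(Fintype.card α)! * hchoose

end Perm

theorem multiplicity_S_n_minus_2_2_in_tensor_power_general (n r : ℕ) (hn : 4 ≤ n)
    (hrn : r ≤ n - 2) :
    ∑ σ : Equiv.Perm (Fin n),
        (fixCount σ : ℤ) ^ r *
          ((Nat.choose (fixCount σ) 2 : ℤ) + (twoCycleCount σ : ℤ) - (fixCount σ : ℤ)) =
      (Nat.factorial n : ℤ) *
        ∑ i ∈ Finset.Icc 2 r, (Nat.choose i 2 : ℤ) * (stirling r i : ℤ) := by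
  have hexpand (σ : Perm (Fin n)) : (fixCount σ : ℤ) ^ r =
      ∑ i ∈ range (r + 1), (stirling r i : ℤ) * (fixCount σ).descFactorial i := by
    rw [stirling_eq_stirlingSecond_s2]
    exact_mod_cast pow_eq_sum_stirlingSecond_mul_descFactorial _ r
  have hmult (i : ℕ) (hi : i ∈ range (r + 1)) :
      ∑ σ : Perm (Fin n), ((fixCount σ).descFactorial i : ℤ) *
        ((fixCount σ).choose 2 + twoCycleCount σ - fixCount σ) = n ! * i.choose 2 := by
    have := sum_descFactorial_mul_character (α := Fin n) (i := i)
      (by rw [Fintype.card_fin]; rw [mem_range] at hi; omega)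
    rwa [Fintype.card_fin] at this
  have hIcc : ∑ i ∈ Icc 2 r, (i.choose 2 : ℤ) * stirling r i =
      ∑ i ∈ range (r + 1), (i.choose 2 : ℤ) * stirling r i :=
    sum_subset (fun i hi => by simp only [mem_Icc, mem_range] at hi ⊢; omega) fun i hi hi' => by
      simp only [mem_Icc, mem_range, not_and, not_le] at hi hi'
      simp [choose_eq_zero_of_lt (show i < 2 by omega)]
  calc _ = ∑ i ∈ range (r + 1), (stirling r i : ℤ) * ∑ σ : Perm (Fin n),
        ((fixCount σ).descFactorial i : ℤ) *
          ((fixCount σ).choose 2 + twoCycleCount σ - fixCount σ) := by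
        simp_rw [hexpand, sum_mul, mul_sum, mul_assoc]
        exact sum_comm
    _ = _ := by
        rw [sum_congr rfl fun i hi => by rw [hmult i hi], hIcc, mul_sum]
        exact sum_congr rfl fun i _ => by ring

theorem multiplicity_S_n_minus_2_2_in_tensor_power (n r : ℕ) (hn : 4 ≤ n)
    (hr1 : 2 ≤ r) (hrn : r ≤ n - 2) :
    ∑ σ : Equiv.Perm (Fin n),
        (fixCount σ : ℤ) ^ r *
          ((Nat.choose (fixCount σ) 2 : ℤ) + (twoCycleCount σ : ℤ) - (fixCount σ : ℤ)) =
      (Nat.factorial n : ℤ) *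
        ∑ i ∈ Finset.Icc 2 r, (Nat.choose i 2 : ℤ) * (stirling r i : ℤ) :=
  multiplicity_S_n_minus_2_2_in_tensor_power_general n r hn hrn
end

section
/- Let n ≥ 2. For every integer r with 1 ≤ r < n−1, Σ_{σ ∈ S_n} sgn(σ) · fix(σ)^r = 0, while for r = n−1, Σ_{σ ∈ S_n} sgn(σ) · fix(σ)^{n−1} = n!. Representation-theoretically, this says the multiplicity of the sign representation of S_n in the r-th tensor power of the n-dimensional permutation representation is 0 for 1 ≤ r < n−1 and is 1 for r = n−1. -/
open Finset Function
open scoped Nat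

theorem Nat.succ_descFactorial_self (n : ℕ) : (n + 1).descFactorial n = (n + 1)! := by
  simpa [Nat.descFactorial_self, Nat.factorial_succ] using Nat.succ_descFactorial n n

namespace Finset

variable {ι α : Type*} [Fintype ι] [Fintype α] [DecidableEq α]

theorem card_sub_card_le_card_compl_image (f : ι → α) :
    Fintype.card α - Fintype.card ι ≤ #(univ.image f)ᶜ := by
  rw [card_compl]
  exact Nat.sub_le_sub_left (card_image_le.trans_eq card_univ) _

theorem card_compl_image_le_one_iff_injective (h : Fintype.card α = Fintype.card ι + 1)
    {f : ι → α} : #(univ.image f)ᶜ ≤ 1 ↔ Injective f := by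
  rw [← Set.injOn_univ, ← coe_univ, ← card_image_iff, card_compl, card_univ]
  have : #(univ.image f) ≤ Fintype.card ι := card_image_le.trans_eq card_univ
  omega

end Finset

namespace Equiv.Perm

variable {α ι : Type*} [Fintype α] [DecidableEq α] [Fintype ι] [DecidableEq ι]

theorem sum_sign_fixing_eq_zero {s : Finset α} {a b : α} (hab : a ≠ b) (ha : a ∉ s)
    (hb : b ∉ s) : ∑ σ : Perm α with ∀ x ∈ s, σ x = x, (sign σ : ℤ) = 0 := by
  have swap_fixes : ∀ x ∈ s, swap a b x = x := fun x hx =>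
    swap_apply_of_ne_of_ne (ne_of_mem_of_not_mem hx ha) (ne_of_mem_of_not_mem hx hb)
  refine sum_involution (fun σ _ => σ * swap a b) (fun σ _ => by simp [sign_swap hab])
    (fun σ _ _ => mul_ne_left.mpr (mt swap_eq_one_iff.mp hab)) (fun σ hσ => ?_)
    (fun σ _ => mul_swap_mul_self _ _ _)
  simp only [mem_filter_univ] at hσ ⊢
  intro x hx
  simp [swap_fixes x hx, hσ x hx]

theorem eq_one_of_forall_mem_fixed {s : Finset α} (hs : #sᶜ ≤ 1) {σ : Perm α}
    (hσ : ∀ x ∈ s, σ x = x) : σ = 1 := by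
  have : #σ.support ≤ 1 := (card_le_card fun x hx => mem_compl.mpr fun hxs =>
    mem_support.mp hx (hσ x hxs)).trans hs
  have := σ.card_support_ne_one
  exact support_eq_empty_iff.mp (card_eq_zero.mp (by omega))

theorem sum_sign_fixing (s : Finset α) :
    ∑ σ : Perm α with ∀ x ∈ s, σ x = x, (sign σ : ℤ) = if #sᶜ ≤ 1 then 1 else 0 := by
  split_ifs with hs
  · rw [sum_eq_single_of_mem 1 (mem_filter.mpr ⟨mem_univ _, fun _ _ => rfl⟩)
      fun σ hσ => absurd (eq_one_of_forall_mem_fixed hs (mem_filter.mp hσ).2)]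
    simp
  · obtain ⟨a, ha, b, hb, hab⟩ := one_lt_card.mp (not_le.mp hs)
    exact sum_sign_fixing_eq_zero hab (mem_compl.mp ha) (mem_compl.mp hb)

theorem card_fixed_pow_card (σ : Perm α) :
    #{x | σ x = x} ^ Fintype.card ι = #{f : ι → α | ∀ i, σ (f i) = f i} := by
  have : ({f : ι → α | ∀ i, σ (f i) = f i} : Finset _) =
      Fintype.piFinset fun _ => {x | σ x = x} := by
    ext f
    simp [Fintype.mem_piFinset]
  rw [this, Fintype.card_piFinset, prod_const, card_univ]

theorem sum_sign_mul_card_fixed_pow_card :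
    ∑ σ : Perm α, (sign σ : ℤ) * #{x | σ x = x} ^ Fintype.card ι =
      #{f : ι → α | #(univ.image f)ᶜ ≤ 1} := by
  calc ∑ σ : Perm α, (sign σ : ℤ) * #{x | σ x = x} ^ Fintype.card ι
      = ∑ σ : Perm α, ∑ f : ι → α, if ∀ i, σ (f i) = f i then (sign σ : ℤ) else 0 := by
        simp_rw [← Nat.cast_pow, card_fixed_pow_card, card_filter, Nat.cast_sum, mul_sum]
        simp
    _ = ∑ f : ι → α, ∑ σ : Perm α with ∀ x ∈ univ.image f, σ x = x, (sign σ : ℤ) := by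
        rw [sum_comm]
        simp [sum_filter]
    _ = #{f : ι → α | #(univ.image f)ᶜ ≤ 1} := by
        simp only [sum_sign_fixing, sum_boole]

theorem sum_sign_mul_card_fixed_pow_eq_zero (h : Fintype.card ι + 2 ≤ Fintype.card α) :
    ∑ σ : Perm α, (sign σ : ℤ) * #{x | σ x = x} ^ Fintype.card ι = 0 := by
  rw [sum_sign_mul_card_fixed_pow_card, Nat.cast_eq_zero, card_eq_zero, filter_eq_empty_iff]
  intro f _
  have := card_sub_card_le_card_compl_image f
  omega

theorem sum_sign_mul_card_fixed_pow_eq_factorial (h : Fintype.card α = Fintype.card ι + 1) :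
    ∑ σ : Perm α, (sign σ : ℤ) * #{x | σ x = x} ^ Fintype.card ι = (Fintype.card α)! := by
  rw [sum_sign_mul_card_fixed_pow_card,
    filter_congr fun f _ => card_compl_image_le_one_iff_injective h, ← Fintype.card_subtype,
    Fintype.card_congr (Equiv.subtypeInjectiveEquivEmbedding ι α), Fintype.card_embedding_eq, h,
    Nat.succ_descFactorial_self]

end Equiv.Perm

theorem multiplicity_sign_in_tensor_power (n : ℕ) (hn : 2 ≤ n) :
    (∀ r : ℕ, 1 ≤ r → r < n - 1 →
        ∑ σ : Equiv.Perm (Fin n), (Equiv.Perm.sign σ : ℤ) * (fixCount σ : ℤ) ^ r = 0) ∧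
      ∑ σ : Equiv.Perm (Fin n), (Equiv.Perm.sign σ : ℤ) * (fixCount σ : ℤ) ^ (n - 1) =
        (Nat.factorial n : ℤ) := by
  refine ⟨fun r _ hr => ?_, ?_⟩
  · simpa [fixCount] using Equiv.Perm.sum_sign_mul_card_fixed_pow_eq_zero
      (α := Fin n) (ι := Fin r) (by rw [Fintype.card_fin, Fintype.card_fin]; omega)
  · simpa [fixCount] using Equiv.Perm.sum_sign_mul_card_fixed_pow_eq_factorial
      (α := Fin n) (ι := Fin (n - 1)) (by rw [Fintype.card_fin, Fintype.card_fin]; omega)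
end

section
/- Let n ≥ 2 and k ≥ 1. Let ν_1, ν_2, …, ν_k be probability measures on the symmetric group S_n, each of which is a class measure (i.e., conjugation-invariant: ν_j(τστ^{-1}) = ν_j(σ) for all σ, τ ∈ S_n), and suppose ν_1 is supported on the set of permutations with exactly one fixed point (i.e., ν_1(σ) = 0 whenever fix(σ) ≠ 1). Let μ_k = ν_k ∗ ν_{k−1} ∗ ⋯ ∗ ν_1 be their convolution. Then the expected number of fixed points under μ_k equals one: Σ_{σ ∈ S_n} μ_k(σ) · fix(σ) = 1. (In Markov chain language: a random walk on S_n started at the identity whose first increment is a class measure supported on one-fixed-point permutations and whose subsequent increments are arbitrary class measures averages exactly one fixed point at every step.) -/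
/-- Convolution of two (signed) measures on a finite group:
`(μ ∗ ν)(g) = Σ_h μ(g h⁻¹) ν(h)`. -/
def conv {G : Type*} [Group G] [Fintype G] (μ ν : G → ℝ) : G → ℝ :=
  fun g => ∑ h : G, μ (g * h⁻¹) * ν h

open Finset

section Convolution

variable {G : Type*} [Group G] [Fintype G]

lemma sum_conv_mul (μ ν f : G → ℝ) :
    ∑ g, conv μ ν g * f g = ∑ h, ν h * ∑ s, μ s * f (s * h) := by
  simp only [conv, sum_mul, mul_sum]
  rw [sum_comm]
  refine sum_congr rfl fun h _ => ?_
  refine Fintype.sum_bijective (· * h⁻¹) (Group.mulRight_bijective h⁻¹) _ _ fun g => ?_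
  simp only [inv_mul_cancel_right]
  ring

lemma sum_conv (μ ν : G → ℝ) : ∑ g, conv μ ν g = (∑ g, μ g) * ∑ g, ν g := by
  have h := sum_conv_mul μ ν 1
  simp only [Pi.one_apply, mul_one] at h
  rw [h, ← sum_mul, mul_comm]

end Convolution

namespace Equiv.Perm

variable {α : Type*} [Fintype α] [DecidableEq α]

def transition (ν : Perm α → ℝ) (a b : α) : ℝ := ∑ s with s a = b, ν s

lemma sum_mul_card_fixedPoints_mul (ν : Perm α → ℝ) (h : Perm α) :
    ∑ s, ν s * (#{x | (s * h) x = x} : ℝ) = ∑ x, transition ν (h x) x := by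
  simp only [natCast_card_filter, mul_sum, transition, sum_filter]
  rw [sum_comm]
  refine sum_congr rfl fun y _ => sum_congr rfl fun s _ => ?_
  rw [mul_boole]
  rfl

variable {ν : Perm α → ℝ}

lemma sum_transition (ν : Perm α → ℝ) (a : α) : ∑ b, transition ν a b = ∑ s, ν s := by
  simp only [transition, sum_filter]
  rw [sum_comm]
  simp

lemma transition_apply_apply (hν : ∀ σ τ, ν (τ * σ * τ⁻¹) = ν σ) (t : Perm α) (a b : α) :
    transition ν (t a) (t b) = transition ν a b := by
  simp only [transition, sum_filter]
  refine (Fintype.sum_bijective _ (MulAut.conj t).bijective _ _ fun s => ?_).symm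
  simp [hν]

lemma transition_eq_of_ne (hν : ∀ σ τ, ν (τ * σ * τ⁻¹) = ν σ) {a b c d : α} (hab : a ≠ b)
    (hcd : c ≠ d) : transition ν c d = transition ν a b := by
  obtain ⟨t, rfl, rfl⟩ :=
    MulAction.is_two_pretransitive_iff.mp (isMultiplyPretransitive α 2) hab hcd
  exact transition_apply_apply hν t a b

lemma transition_self (hν : ∀ σ τ, ν (τ * σ * τ⁻¹) = ν σ) (a c : α) :
    transition ν c c = transition ν a a := by
  simpa using transition_apply_apply hν (swap a c) a a

lemma transition_eq (hν : ∀ σ τ, ν (τ * σ * τ⁻¹) = ν σ) {a b : α} (hab : a ≠ b) (c d : α) :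
    transition ν c d =
      transition ν a b + (transition ν a a - transition ν a b) * if c = d then 1 else 0 := by
  split_ifs with hcd
  · rw [hcd, transition_self hν a d]; ring
  · rw [transition_eq_of_ne hν hab hcd]; ring

lemma sum_mul_card_fixedPoints_mul_sub_one (hν : ∀ σ τ, ν (τ * σ * τ⁻¹) = ν σ) {a b : α}
    (hab : a ≠ b) (h : Perm α) :
    ∑ s, ν s * ((#{x | (s * h) x = x} : ℝ) - 1) =
      (transition ν a a - transition ν a b) * ((#{x | h x = x} : ℝ) - 1) := by
  have hfix : ∑ x, transition ν (h x) x =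
      Fintype.card α * transition ν a b +
        (transition ν a a - transition ν a b) * #{x | h x = x} := by
    rw [sum_congr rfl fun x _ => transition_eq hν hab (h x) x]
    simp only [sum_add_distrib, sum_const, card_univ,
      nsmul_eq_mul, ← mul_sum, sum_boole]
  have hmass : ∑ s, ν s =
      Fintype.card α * transition ν a b + (transition ν a a - transition ν a b) := by
    rw [← sum_transition ν a, sum_congr rfl fun d _ => transition_eq hν hab a d]
    simp only [sum_add_distrib, sum_const, card_univ, nsmul_eq_mul, ← mul_sum, sum_ite_eq,
      mem_univ, if_true]
    ring
  simp only [mul_sub, mul_one, sum_sub_distrib, sum_mul_card_fixedPoints_mul, hfix, hmass]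
  ring

lemma sum_conv_mul_card_fixedPoints_sub_one (hν : ∀ σ τ, ν (τ * σ * τ⁻¹) = ν σ) {a b : α}
    (hab : a ≠ b) (μ : Perm α → ℝ) :
    ∑ σ, conv ν μ σ * ((#{x | σ x = x} : ℝ) - 1) =
      (transition ν a a - transition ν a b) * ∑ σ, μ σ * ((#{x | σ x = x} : ℝ) - 1) := by
  simp only [sum_conv_mul, sum_mul_card_fixedPoints_mul_sub_one hν hab, mul_sum]
  exact sum_congr rfl fun h _ => by ring

end Equiv.Perm

theorem expected_fixed_points_eq_one_general (n k : ℕ) (hn : 2 ≤ n) (hk : 1 ≤ k)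
    (ν : ℕ → Equiv.Perm (Fin n) → ℝ)
    (hprob : ∀ j ∈ Finset.Icc 1 k, ∑ σ : Equiv.Perm (Fin n), ν j σ = 1)
    (hclass : ∀ j ∈ Finset.Icc 1 k, ∀ σ τ : Equiv.Perm (Fin n), ν j (τ * σ * τ⁻¹) = ν j σ)
    (hsupp : ∀ σ : Equiv.Perm (Fin n), fixCount σ ≠ 1 → ν 1 σ = 0)
    (μ : ℕ → Equiv.Perm (Fin n) → ℝ)
    (hμ1 : μ 1 = ν 1)
    (hμ : ∀ j : ℕ, 1 ≤ j → j < k → μ (j + 1) = conv (ν (j + 1)) (μ j)) :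
    ∑ σ : Equiv.Perm (Fin n), μ k σ * (fixCount σ : ℝ) = 1 := by
  have h01 : (⟨0, by omega⟩ : Fin n) ≠ ⟨1, by omega⟩ := by simp
  have hmass : ∀ j, 1 ≤ j → j ≤ k → ∑ σ, μ j σ = 1 := by
    intro j hj
    induction j, hj using Nat.le_induction with
    | base => exact fun hk => hμ1 ▸ hprob 1 (mem_Icc.mpr ⟨le_rfl, hk⟩)
    | succ j hj ih =>
      intro hjk
      rw [hμ j hj hjk, sum_conv, hprob _ (mem_Icc.mpr ⟨by omega, hjk⟩), ih (by omega), one_mul]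
  have hdefect : ∀ j, 1 ≤ j → j ≤ k → ∑ σ, μ j σ * ((fixCount σ : ℝ) - 1) = 0 := by
    intro j hj
    induction j, hj using Nat.le_induction with
    | base =>
      refine fun _ => sum_eq_zero fun σ _ => ?_
      by_cases hσ : fixCount σ = 1
      · simp [hσ]
      · simp [hμ1, hsupp σ hσ]
    | succ j hj ih =>
      intro hjk
      unfold fixCount at ih ⊢
      rw [hμ j hj hjk, Equiv.Perm.sum_conv_mul_card_fixedPoints_sub_one
        (hclass _ (mem_Icc.mpr ⟨by omega, hjk⟩)) h01, ih (by omega), mul_zero]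
  calc ∑ σ, μ k σ * (fixCount σ : ℝ)
      = ∑ σ, μ k σ * ((fixCount σ : ℝ) - 1) + ∑ σ, μ k σ := by
        simp only [← sum_add_distrib, mul_sub, mul_one, sub_add_cancel]
    _ = 1 := by rw [hdefect k hk le_rfl, hmass k hk le_rfl, zero_add]

/-- A random walk on `S_n` whose first increment is a class measure supported on
permutations with exactly one fixed point, and whose subsequent increments are
arbitrary class measures, averages exactly one fixed point at every step. -/
theorem expected_fixed_points_eq_one (n k : ℕ) (hn : 2 ≤ n) (hk : 1 ≤ k)
    (ν : ℕ → Equiv.Perm (Fin n) → ℝ)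
    (hnonneg : ∀ j ∈ Finset.Icc 1 k, ∀ σ : Equiv.Perm (Fin n), 0 ≤ ν j σ)
    (hprob : ∀ j ∈ Finset.Icc 1 k, ∑ σ : Equiv.Perm (Fin n), ν j σ = 1)
    (hclass : ∀ j ∈ Finset.Icc 1 k, ∀ σ τ : Equiv.Perm (Fin n), ν j (τ * σ * τ⁻¹) = ν j σ)
    (hsupp : ∀ σ : Equiv.Perm (Fin n), fixCount σ ≠ 1 → ν 1 σ = 0)
    (μ : ℕ → Equiv.Perm (Fin n) → ℝ)
    (hμ1 : μ 1 = ν 1)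
    (hμ : ∀ j : ℕ, 1 ≤ j → j < k → μ (j + 1) = conv (ν (j + 1)) (μ j)) :
    ∑ σ : Equiv.Perm (Fin n), μ k σ * (fixCount σ : ℝ) = 1 :=
  expected_fixed_points_eq_one_general n k hn hk ν hprob hclass hsupp μ hμ1 hμ
end
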